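/- Let n ≥ 3, let Fₙ be the free group on x₁, ..., xₙ, let r = x₁²x₂²···xₙ², and let R be the normal closure of r in Fₙ. Let φ be the automorphism of Fₙ with φ(x₁) = x₁⁻¹·xₙ⁻²···x₂⁻² and φ(xᵢ) = xᵢ for i ≠ 1. Then for every integer k ≥ 1, the automorphism φᵏ is not an inner automorphism induced by an element of R; in particular, the quotient group Ker(ρ)/Inn_R is not periodic, where ρ: Stab(R) → Aut(Fₙ/R) is the natural homomorphism. -/

import Mathlib

open Pointwise

/-- The subgroup of `Aut F` of automorphisms stabilizing `R` (setwise). -/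
def Stab {F : Type*} [Group F] (R : Subgroup F) : Subgroup (MulAut F) :=
  MulAction.stabilizer (MulAut F) R

/-- The subgroup of `Aut F` of inner automorphisms induced by elements of `R`. -/
def InnR {F : Type*} [Group F] (R : Subgroup F) : Subgroup (MulAut F) where
  carrier := {φ | ∃ s ∈ R, φ = MulAut.conj s}
  one_mem' := ⟨1, R.one_mem, by simp⟩
  mul_mem' := by
    rintro _ _ ⟨s, hs, rfl⟩ ⟨t, ht, rfl⟩
    exact ⟨s * t, R.mul_mem hs ht, by simp [map_mul]⟩
  inv_mem' := by
    rintro _ ⟨s, hs, rfl⟩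
    exact ⟨s⁻¹, R.inv_mem hs, by simp⟩

/-- The kernel of the natural homomorphism ρ : Stab(R) → Aut(F/R): automorphisms of
`F` stabilizing `R` and inducing the identity automorphism of `F/R`. -/
def KerRho {F : Type*} [Group F] (R : Subgroup F) : Set (MulAut F) :=
  {φ | φ ∈ Stab R ∧ ∀ x : F, x⁻¹ * φ x ∈ R}

/-- The word r = x₁²x₂²⋯xₙ² in the free group of rank n. -/
def rNonor (n : ℕ) : FreeGroup (Fin n) :=
  (List.ofFn fun i : Fin n => FreeGroup.of i ^ 2).prod

/-- for n ≥ 3, r = x₁²x₂²⋯xₙ², R the normal closure of r, and the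
automorphism φ with φ(x₁) = x₁⁻¹xₙ⁻²⋯x₂⁻² = x₁⁻¹·r⁻¹·x₁² and φ(xᵢ) = xᵢ for i ≠ 1:
no positive power of φ is an inner automorphism induced by an element of R; in
particular Ker(ρ)/Inn_R is not periodic (it has an element of infinite order). -/
theorem stmt11 (n : ℕ) (hn : 3 ≤ n)
    (φ : MulAut (FreeGroup (Fin n)))
    (hφ1 : φ (FreeGroup.of ⟨0, by omega⟩) =
      (FreeGroup.of (⟨0, by omega⟩ : Fin n))⁻¹ * (rNonor n)⁻¹ *
        (FreeGroup.of (⟨0, by omega⟩ : Fin n)) ^ 2)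
    (hφi : ∀ i : Fin n, i ≠ ⟨0, by omega⟩ → φ (FreeGroup.of i) = FreeGroup.of i) :
    (∀ k : ℕ, 1 ≤ k → φ ^ k ∉ InnR (Subgroup.normalClosure {rNonor n})) ∧
    ∃ α : MulAut (FreeGroup (Fin n)),
      α ∈ KerRho (Subgroup.normalClosure {rNonor n}) ∧
      ∀ k : ℕ, 1 ≤ k → α ^ k ∉ InnR (Subgroup.normalClosure {rNonor n}) := by
  obtain ⟨m, rfl⟩ : ∃ m, n = m + 3 := ⟨n - 3, by omega⟩
  have hmk : (⟨0, by omega⟩ : Fin (m+3)) = 0 := rfl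
  rw [hmk] at hφ1
  simp only [hmk] at hφi
  set a := FreeGroup.of (0 : Fin (m+3)) with ha
  set u := (List.ofFn fun i : Fin (m+2) => FreeGroup.of i.succ ^ 2).prod with hu
  set R := Subgroup.normalClosure {rNonor (m+3)} with hR
  have hRn : R.Normal := Subgroup.normalClosure_normal
  have hrmem : rNonor (m+3) ∈ R := Subgroup.subset_normalClosure rfl
  have hr : rNonor (m+3) = a ^ 2 * u := by
    rw [rNonor, List.ofFn_succ, List.prod_cons]
  have hφu : φ u = u := by
    rw [hu, map_list_prod, List.map_ofFn]
    have : (⇑φ ∘ fun i : Fin (m+2) => FreeGroup.of i.succ ^ 2) =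
        fun i : Fin (m+2) => FreeGroup.of i.succ ^ 2 := by
      funext i
      simp only [Function.comp_apply, map_pow, hφi i.succ (Fin.succ_ne_zero i)]
    rw [this]
  have hφa : φ a = a⁻¹ * (a ^ 2 * u)⁻¹ * a ^ 2 := by rw [hφ1, hr]
  have hφr : φ (a ^ 2 * u) = a⁻¹ * (a ^ 2 * u)⁻¹ * a := by
    rw [map_mul, map_pow, hφa, hφu]
    simp only [mul_inv_rev, inv_inv, pow_two]
    group
  have hφ2a : (φ ^ 2) a = u * a * u⁻¹ := by
    rw [sq, MulAut.mul_apply, hφa]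
    simp only [map_mul, map_inv, map_pow, hφa, hφu]
    simp only [mul_inv_rev, inv_inv, pow_two]
    group
  have hφ2r : (φ ^ 2) (a ^ 2 * u) = u * (a ^ 2 * u) * u⁻¹ := by
    rw [sq, MulAut.mul_apply, hφr]
    simp only [map_mul, map_inv, map_pow, hφa, hφu]
    simp only [mul_inv_rev, inv_inv, pow_two]
    group
  have hpow_fix : ∀ (k : ℕ) (j : Fin (m+3)), j ≠ 0 →
      (φ ^ k) (FreeGroup.of j) = FreeGroup.of j := by
    intro k
    induction k with
    | zero => intro j _; simp
    | succ k ih => intro j hj; rw [pow_succ', MulAut.mul_apply, ih j hj, hφi j hj]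
  have hpowu : ∀ k : ℕ, (φ ^ k) u = u := by
    intro k
    induction k with
    | zero => simp
    | succ k ih => rw [pow_succ, MulAut.mul_apply, hφu, ih]
  have heven : ∀ k : ℕ, (φ ^ (2*k)) a = u ^ k * a * (u ^ k)⁻¹ ∧
      (φ ^ (2*k)) (a ^ 2 * u) = u ^ k * (a ^ 2 * u) * (u ^ k)⁻¹ := by
    intro k
    induction k with
    | zero => simp
    | succ k ih =>
      have h2 : 2 * (k+1) = 2 * k + 2 := by ring
      constructor
      · rw [h2, pow_add, MulAut.mul_apply, hφ2a]
        simp only [map_mul, map_inv, hpowu, ih.1]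
        group
      · rw [h2, pow_add, MulAut.mul_apply, hφ2r]
        simp only [map_mul, map_inv, hpowu, ih.2]
        group
  -- the permutation representation
  set T : Equiv.Perm ℚ := Equiv.addLeft 1 with hT
  set D : Equiv.Perm ℚ := Equiv.mulLeft₀ 2 two_ne_zero with hD
  have hTq : ∀ q : ℚ, T q = 1 + q := fun q => rfl
  have hDq : ∀ q : ℚ, D q = 2 * q := fun q => rfl
  set π : FreeGroup (Fin (m+3)) →* Equiv.Perm ℚ :=
    FreeGroup.lift (fun i => if i.val = 2 then D else if i.val ≤ 1 then T else 1) with hπ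
  have hπ0 : π a = T := by rw [ha, hπ, FreeGroup.lift_apply_of]; rfl
  have hπ1 : π (FreeGroup.of (1 : Fin (m+3))) = T := by rw [hπ, FreeGroup.lift_apply_of]; rfl
  have hπ2 : π (FreeGroup.of (2 : Fin (m+3))) = D := by rw [hπ, FreeGroup.lift_apply_of]; rfl
  have hu2 : u = FreeGroup.of (1 : Fin (m+3)) ^ 2 * (FreeGroup.of (2 : Fin (m+3)) ^ 2 *
      (List.ofFn fun i : Fin m => FreeGroup.of i.succ.succ.succ ^ 2).prod) := by
    rw [hu, List.ofFn_succ, List.ofFn_succ, List.prod_cons, List.prod_cons]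
    rfl
  have hπtail : π (List.ofFn fun i : Fin m => FreeGroup.of i.succ.succ.succ ^ 2).prod = 1 := by
    rw [map_list_prod, List.map_ofFn]
    refine List.prod_eq_one ?_
    intro x hx
    rw [List.mem_ofFn] at hx
    obtain ⟨i, rfl⟩ := hx
    show π (FreeGroup.of i.succ.succ.succ ^ 2) = 1
    rw [map_pow, hπ, FreeGroup.lift_apply_of]
    have h3 : (i.succ.succ.succ : Fin (m+3)).val = i.val + 3 := by
      simp [Fin.val_succ]
    rw [h3, if_neg (by omega), if_neg (by omega)]
    exact one_pow 2
  have hπu : π u = T ^ 2 * (D ^ 2 * 1) := by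
    rw [hu2, map_mul, map_mul, map_pow, map_pow, hπ1, hπ2, hπtail]
  have hvq : ∀ q : ℚ, (π u) q = 4 * q + 2 := by
    intro q
    rw [hπu]
    simp only [mul_one, sq, Equiv.Perm.mul_apply, hTq, hDq]
    ring_nf
  have hvk : ∀ k : ℕ, ∃ c : ℚ, ∀ q : ℚ, ((π u) ^ k) q = 4 ^ k * q + c := by
    intro k
    induction k with
    | zero => exact ⟨0, fun q => by simp⟩
    | succ k ih =>
      obtain ⟨c, hc⟩ := ih
      refine ⟨4 ^ k * 2 + c, fun q => ?_⟩
      rw [pow_succ, Equiv.Perm.mul_apply, hvq, hc]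
      ring
  have haff : ∀ x : FreeGroup (Fin (m+3)), ∃ c d : ℚ, c ≠ 0 ∧ ∀ q : ℚ, (π x) q = c * q + d := by
    intro x
    induction x using FreeGroup.induction_on with
    | C1 => exact ⟨1, 0, one_ne_zero, fun q => by simp⟩
    | of i =>
      by_cases h2 : i.val = 2
      · refine ⟨2, 0, two_ne_zero, fun q => ?_⟩
        rw [hπ, FreeGroup.lift_apply_of, if_pos h2, hDq]; ring
      by_cases h1 : i.val ≤ 1
      · refine ⟨1, 1, one_ne_zero, fun q => ?_⟩
        rw [hπ, FreeGroup.lift_apply_of, if_neg h2, if_pos h1, hTq]; ring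
      · refine ⟨1, 0, one_ne_zero, fun q => ?_⟩
        rw [hπ, FreeGroup.lift_apply_of, if_neg h2, if_neg h1]; simp
    | inv_of i ih =>
      obtain ⟨c, d, hc, hcd⟩ := ih
      refine ⟨c⁻¹, -d/c, inv_ne_zero hc, fun q => ?_⟩
      rw [map_inv]
      show (π (FreeGroup.of i)).symm q = c⁻¹ * q + -d / c
      rw [Equiv.symm_apply_eq, hcd]
      field_simp
      ring
    | mul x y ihx ihy =>
      obtain ⟨c1, d1, hc1, h1⟩ := ihx
      obtain ⟨c2, d2, hc2, h2⟩ := ihy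
      refine ⟨c1 * c2, c1 * d2 + d1, mul_ne_zero hc1 hc2, fun q => ?_⟩
      rw [map_mul, Equiv.Perm.mul_apply, h2, h1]
      ring
  -- the exponent-sum homomorphism
  set χ : FreeGroup (Fin (m+3)) →* Multiplicative ℤ :=
    FreeGroup.lift (fun _ => Multiplicative.ofAdd (1:ℤ)) with hχ
  have hχof : ∀ i : Fin (m+3), χ (FreeGroup.of i) = Multiplicative.ofAdd (1:ℤ) := by
    intro i; rw [hχ, FreeGroup.lift_apply_of]
  have hχu : χ u = Multiplicative.ofAdd (2 * (m+2) : ℤ) := by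
    rw [hu, map_list_prod, List.map_ofFn]
    have : (⇑χ ∘ fun i : Fin (m+2) => FreeGroup.of i.succ ^ 2) =
        fun _ : Fin (m+2) => Multiplicative.ofAdd (2:ℤ) := by
      funext i
      simp only [Function.comp_apply, map_pow, hχof]
      rfl
    rw [this, List.ofFn_const, List.prod_replicate, ← ofAdd_nsmul]
    congr 1
    push_cast
    ring
  have h1ne0 : (1 : Fin (m+3)) ≠ 0 := by
    intro h
    have := congrArg Fin.val h
    simp at this
  have h2ne0 : (2 : Fin (m+3)) ≠ 0 := by
    intro h
    have h' := congrArg Fin.val h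
    have e2 : ((2 : Fin (m+3)) : ℕ) = 2 := rfl
    have e0 : ((0 : Fin (m+3)) : ℕ) = 0 := rfl
    omega
  -- PART 1
  have part1 : ∀ k : ℕ, 1 ≤ k → φ ^ k ∉ InnR R := by
    rintro k hk ⟨s, hsR, hconj⟩
    have happ : ∀ x, (φ ^ k) x = s * x * s⁻¹ := by
      intro x; rw [hconj]; rfl
    rcases Nat.even_or_odd k with ⟨k₀, hk₀⟩ | ⟨k₀, hk₀⟩
    · -- even case
      have hk2 : k = 2 * k₀ := by omega
      have hk₀1 : 1 ≤ k₀ := by omega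
      -- s commutes with of 1 and of 2
      have hc1 : s * FreeGroup.of (1 : Fin (m+3)) = FreeGroup.of (1 : Fin (m+3)) * s := by
        have := happ (FreeGroup.of (1 : Fin (m+3)))
        rw [hpow_fix k _ h1ne0] at this
        exact mul_inv_eq_iff_eq_mul.mp this.symm
      have hc2 : s * FreeGroup.of (2 : Fin (m+3)) = FreeGroup.of (2 : Fin (m+3)) * s := by
        have := happ (FreeGroup.of (2 : Fin (m+3)))
        rw [hpow_fix k _ h2ne0] at this
        exact mul_inv_eq_iff_eq_mul.mp this.symm
      obtain ⟨c, d, hc, hcd⟩ := haff s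
      have hcT : ∀ q : ℚ, (π s) (T q) = T ((π s) q) := by
        intro q
        have := congrArg π hc1
        rw [map_mul, map_mul, hπ1] at this
        have := congrArg (fun f : Equiv.Perm ℚ => f q) this
        simpa [Equiv.Perm.mul_apply] using this
      have hcD : ∀ q : ℚ, (π s) (D q) = D ((π s) q) := by
        intro q
        have := congrArg π hc2
        rw [map_mul, map_mul, hπ2] at this
        have := congrArg (fun f : Equiv.Perm ℚ => f q) this
        simpa [Equiv.Perm.mul_apply] using this
      have hceq : c = 1 := by
        have := hcT 0
        rw [hTq, hTq, hcd, hcd] at this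
        linarith
      have hdeq : d = 0 := by
        have := hcD 0
        rw [hDq, hDq, hcd, hcd] at this
        linarith
      have hπs : π s = 1 := by
        ext q
        rw [hcd, hceq, hdeq]
        simp
      -- now the main equation
      have hmain := happ a
      rw [hk2, (heven k₀).1] at hmain
      have hπmain := congrArg π hmain
      simp only [map_mul, map_inv, map_pow, hπ0, hπs, one_mul, mul_one, inv_one] at hπmain
      obtain ⟨c₀, hc₀⟩ := hvk k₀
      have := congrArg (fun f : Equiv.Perm ℚ => f (((π u) ^ k₀) 0)) hπmain
      simp only [Equiv.Perm.mul_apply, Equiv.Perm.inv_def, Equiv.symm_apply_apply] at this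
      simp only [hTq, hc₀] at this
      have hlt : (1:ℚ) < 4 ^ k₀ := one_lt_pow₀ (by norm_num) (by omega)
      nlinarith [this, hlt]
    · -- odd case
      have hφka : (φ ^ k) a =
          u ^ k₀ * ((a⁻¹ * (a ^ 2 * u)⁻¹ * a ^ 2)) * (u ^ k₀)⁻¹ := by
        have hk2 : k = 2 * k₀ + 1 := by omega
        rw [hk2, pow_succ, MulAut.mul_apply, hφa]
        simp only [map_mul, map_inv, map_pow, (heven k₀).1, (heven k₀).2, hpowu]
        simp only [mul_inv_rev, inv_inv, pow_two]
        group
      have := happ a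
      rw [hφka] at this
      have hχeq := congrArg χ this
      simp only [map_mul, map_inv, map_pow, hχof, ha] at hχeq
      -- in the abelian group Multiplicative ℤ, conjugation is trivial
      have htoAdd := congrArg Multiplicative.toAdd hχeq
      simp only [toAdd_mul, toAdd_inv, toAdd_pow, toAdd_ofAdd, hχu] at htoAdd
      omega
  refine ⟨part1, φ, ⟨?_, ?_⟩, part1⟩
  · -- φ ∈ Stab R
    have key : ∀ (e : MulAut (FreeGroup (Fin (m+3)))), e (rNonor (m+3)) ∈ R →
        ∀ x ∈ R, e x ∈ R := by
      intro e he x hx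
      have hcomap : R ≤ R.comap e.toMonoidHom := by
        rw [hR]
        refine Subgroup.normalClosure_le_normal ?_
        · exact Set.singleton_subset_iff.2 (by simpa using he)
      exact hcomap hx
    have hφrR : φ (rNonor (m+3)) ∈ R := by
      rw [hr, hφr]
      have : a⁻¹ * (a ^ 2 * u)⁻¹ * a = a⁻¹ * (a ^ 2 * u)⁻¹ * (a⁻¹)⁻¹ := by group
      rw [this]
      exact hRn.conj_mem _ (R.inv_mem (hr ▸ hrmem)) a⁻¹
    have hφirR : φ⁻¹ (rNonor (m+3)) ∈ R := by
      have h1 : rNonor (m+3) = a * (φ (rNonor (m+3)))⁻¹ * a⁻¹ := by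
        rw [hr, hφr]; group
      have h2 : φ⁻¹ (rNonor (m+3)) = φ⁻¹ a * (rNonor (m+3))⁻¹ * (φ⁻¹ a)⁻¹ := by
        conv_lhs => rw [h1]
        simp only [map_mul, map_inv]
        rw [show φ⁻¹ (φ (rNonor (m+3))) = rNonor (m+3) from φ.symm_apply_apply _]
      rw [h2]
      exact hRn.conj_mem _ (R.inv_mem hrmem) _
    show φ ∈ Stab R
    rw [Stab, MulAction.mem_stabilizer_iff]
    ext x
    rw [Subgroup.mem_pointwise_smul_iff_inv_smul_mem]
    constructor
    · intro hx
      have := key φ hφrR _ hx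
      simpa using this
    · intro hx
      exact key φ⁻¹ hφirR _ hx
  · -- induced identity on F/R
    intro x
    induction x using FreeGroup.induction_on with
    | C1 => simpa using R.one_mem
    | of i =>
      by_cases hi : i = 0
      · subst hi
        rw [← ha, hφa]
        have hmem : (a⁻¹ * a⁻¹) * (a^2*u)⁻¹ * (a⁻¹ * a⁻¹)⁻¹ ∈ R :=
          hRn.conj_mem _ (R.inv_mem (hr ▸ hrmem)) _
        have heq : a⁻¹ * (a⁻¹ * (a ^ 2 * u)⁻¹ * a ^ 2) =
            (a⁻¹ * a⁻¹) * (a^2*u)⁻¹ * (a⁻¹ * a⁻¹)⁻¹ := by group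
        rw [heq]
        exact hmem
      · rw [hφi i hi]
        simpa using R.one_mem
    | inv_of i ih =>
      rw [map_inv]
      have hmem : (FreeGroup.of i : FreeGroup (Fin (m+3))) * ((FreeGroup.of i)⁻¹ * φ (FreeGroup.of i))⁻¹ *
          (FreeGroup.of i)⁻¹ ∈ R := hRn.conj_mem _ (R.inv_mem ih) _
      have heq : ((FreeGroup.of i : FreeGroup (Fin (m+3))))⁻¹⁻¹ * (φ (FreeGroup.of i))⁻¹ =
          (FreeGroup.of i) * ((FreeGroup.of i)⁻¹ * φ (FreeGroup.of i))⁻¹ * (FreeGroup.of i)⁻¹ := by group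
      rw [heq]
      exact hmem
    | mul x y ihx ihy =>
      rw [map_mul]
      have hmem : y⁻¹ * (x⁻¹ * φ x) * y⁻¹⁻¹ ∈ R := hRn.conj_mem _ ihx y⁻¹
      have heq : (x*y)⁻¹ * (φ x * φ y) =
          (y⁻¹ * (x⁻¹ * φ x) * y⁻¹⁻¹) * (y⁻¹ * φ y) := by group
      rw [heq]
      exact R.mul_mem hmem ihy
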